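/- arXiv:2011.00295 — 2 statements merged into one kernel-verified Lean document; each statement's English description precedes it below -/
import Mathlib

section
/- Let F be the free group on a family of generators w_k indexed by k ∈ ℤ, and let φ : F → (ℤ/2) × (ℤ/2) be the homomorphism sending w_k to (1, k mod 2). Then the kernel of φ equals the normal closure in F of the set {w₀², w₁², [w₀, w₁]} ∪ {w_m · w_{m-2}⁻¹ : m ∈ ℤ}. -/
/-!
Every relator maps to `1` in `(ℤ/2)²`, so the normal closure `N` of the relators lies in `ker φ`.
Conversely, in `F ⧸ N` the images of `w₀` and `w₁` are commuting involutions and `w_k ≡ w_{k mod 2}`.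
Hence `(a, b) ↦ w₀ ^ a * (w₀ w₁) ^ b` is a homomorphism `(ℤ/2)² → F ⧸ N` sending `φ w_k = (1, k)` back
to the class of `w_k`, so the quotient map `F → F ⧸ N` factors through `φ` and `ker φ ≤ N`.
-/

/-- Generators `w_k`, `k ∈ ℤ`, of the free group on a `ℤ`-indexed set. -/
def w (k : ℤ) : FreeGroup ℤ := FreeGroup.of k

/-- The homomorphism `F → (ℤ/2) × (ℤ/2)` sending `w_k ↦ (1, k mod 2)`. -/
def φ : FreeGroup ℤ →* Multiplicative (ZMod 2 × ZMod 2) :=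
  FreeGroup.lift fun k : ℤ => Multiplicative.ofAdd ((1 : ZMod 2), (k : ZMod 2))

theorem MonoidHom.ker_eq_of_comp_eq_mk' {G H : Type*} [Group G] [Group H] {N : Subgroup G}
    [N.Normal] (f : G →* H) (g : H →* G ⧸ N) (hg : g.comp f = QuotientGroup.mk' N)
    (hN : N ≤ f.ker) : f.ker = N := by
  refine le_antisymm (fun x hx => ?_) hN
  rw [← QuotientGroup.ker_mk' N, ← hg, MonoidHom.mem_ker, MonoidHom.comp_apply, hx, map_one]

section KleinFour

variable {G : Type*} [Group G]

def zmodPowHom {n : ℕ} [NeZero n] (x : G) (hx : x ^ n = 1) : Multiplicative (ZMod n) →* G where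
  toFun a := x ^ a.toAdd.val
  map_one' := by simp
  map_mul' a b := by
    rw [toAdd_mul, ZMod.val_add, ← pow_eq_pow_mod _ hx, pow_add]

def kleinFourLift (u v : G) (hu : u ^ 2 = 1) (hv : v ^ 2 = 1) (huv : Commute u v) :
    Multiplicative (ZMod 2 × ZMod 2) →* G :=
  ((zmodPowHom u hu).noncommCoprod (zmodPowHom v hv) fun _ _ => huv.pow_pow _ _).comp
    (MulEquiv.prodMultiplicative (G := ZMod 2) (H := ZMod 2)).toMonoidHom

theorem kleinFourLift_ofAdd (u v : G) (hu : u ^ 2 = 1) (hv : v ^ 2 = 1) (huv : Commute u v)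
    (a b : ZMod 2) : kleinFourLift u v hu hv huv (.ofAdd (a, b)) = u ^ a.val * v ^ b.val :=
  rfl

end KleinFour

theorem φ_w (k : ℤ) : φ (w k) = .ofAdd (1, (k : ZMod 2)) := FreeGroup.lift_apply_of

theorem φ_w_sub_two (k : ℤ) : φ (w (k - 2)) = φ (w k) := by
  simp [φ_w, show (2 : ZMod 2) = 0 from rfl]

def relators : Set (FreeGroup ℤ) :=
  {w 0 ^ 2, w 1 ^ 2, (w 0)⁻¹ * (w 1)⁻¹ * w 0 * w 1} ∪ {x | ∃ m : ℤ, x = w m * (w (m - 2))⁻¹}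

theorem normalClosure_relators_le_ker : Subgroup.normalClosure relators ≤ φ.ker := by
  refine Subgroup.normalClosure_le_normal ?_
  rintro x ((rfl | rfl | rfl) | ⟨m, rfl⟩)
  · rw [SetLike.mem_coe, MonoidHom.mem_ker, map_pow, φ_w]; rfl
  · rw [SetLike.mem_coe, MonoidHom.mem_ker, map_pow, φ_w]; rfl
  · simp only [SetLike.mem_coe, MonoidHom.mem_ker, map_mul, map_inv, φ_w]; rfl
  · rw [SetLike.mem_coe, MonoidHom.mem_ker, map_mul, map_inv, φ_w_sub_two, mul_inv_cancel]

local notation "Q" => FreeGroup ℤ ⧸ Subgroup.normalClosure relators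

theorem mk_eq_one_of_mem_relators {r : FreeGroup ℤ} (hr : r ∈ relators) : (r : Q) = 1 :=
  (QuotientGroup.eq_one_iff r).2 (Subgroup.subset_normalClosure hr)

theorem mk_w_zero_sq : (w 0 : Q) ^ 2 = 1 :=
  mk_eq_one_of_mem_relators (.inl (by simp))

theorem mk_w_one_sq : (w 1 : Q) ^ 2 = 1 :=
  mk_eq_one_of_mem_relators (.inl (by simp))

theorem commute_mk_w_zero_mk_w_one : Commute (w 0 : Q) (w 1 : Q) :=
  Commute.inv_inv_iff.mp <| commutatorElement_eq_one_iff_commute.mp <|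
    mk_eq_one_of_mem_relators (.inl (by simp))

theorem periodic_mk_w : Function.Periodic (fun k => (w k : Q)) 2 := fun k =>
  mul_inv_eq_one.mp <| by
    simpa using mk_eq_one_of_mem_relators (.inr ⟨k + 2, rfl⟩)

theorem mk_w_emod_two (k : ℤ) : (w (k % 2) : Q) = w k := by
  rw [Int.emod_def, mul_comm]
  exact periodic_mk_w.sub_int_mul_eq _

def kleinFourToQuotient : Multiplicative (ZMod 2 × ZMod 2) →* Q :=
  kleinFourLift (w 0 : Q) (w 0 * w 1 : Q) mk_w_zero_sq
    (by rw [commute_mk_w_zero_mk_w_one.mul_pow, mk_w_zero_sq, mk_w_one_sq, one_mul])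
    ((Commute.refl _).mul_right commute_mk_w_zero_mk_w_one)

theorem kleinFourToQuotient_comp_φ :
    kleinFourToQuotient.comp φ = QuotientGroup.mk' (Subgroup.normalClosure relators) := by
  refine FreeGroup.ext_hom _ _ fun k => ?_
  rw [MonoidHom.comp_apply, ← w, φ_w, kleinFourToQuotient, kleinFourLift_ofAdd,
    QuotientGroup.mk'_apply, ← mk_w_emod_two k, ← ZMod.intCast_mod k 2, Nat.cast_ofNat]
  have val_one : (1 : ZMod 2).val = 1 := rfl
  rcases Int.emod_two_eq_zero_or_one k with h | h <;> rw [h]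
  · simp [val_one]
  · simp only [Int.cast_one, val_one, pow_one, ← mul_assoc, ← sq, mk_w_zero_sq, one_mul]

/-- The kernel of `φ` is the normal closure of
`{w₀², w₁², [w₀,w₁]} ∪ {w_m w_{m-2}⁻¹ : m ∈ ℤ}`, with `[a,b] = a⁻¹b⁻¹ab`. -/
theorem stmt5 :
    φ.ker =
      Subgroup.normalClosure
        ({w 0 ^ 2, w 1 ^ 2, (w 0)⁻¹ * (w 1)⁻¹ * w 0 * w 1} ∪
          {x : FreeGroup ℤ | ∃ m : ℤ, x = w m * (w (m - 2))⁻¹}) :=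
  φ.ker_eq_of_comp_eq_mk' kleinFourToQuotient kleinFourToQuotient_comp_φ
    normalClosure_relators_le_ker
end

section
/- Let H = ℤ⁶ with the standard symplectic form and standard symplectic basis a₁, a₂, a₃, b₁, b₂, b₃, and let x = a₁. Then there are infinitely many 3-element subsets {c₁, c₂, c₃} of H such that c₁, c₂, c₃ form a basis of a Lagrangian subgroup of H and x = n₁c₁ + n₂c₂ + n₃c₃ for some positive integers n₁, n₂, n₃. -/
/-!
All the triples can be taken inside the Lagrangian `A = span(a₁, a₂, a₃) = {p | p.2 = 0}`,
which is maximal isotropic since `⟨aᵢ, p⟩ = p.2 i`. For every `m` the shear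
`c₁ = a₁ - m a₂ - a₃` together with `a₂, a₃` is a basis of `A`, and `a₁ = c₁ + m a₂ + a₃`;
so each `m > 0` gives an admissible set `{c₁, a₂, a₃}`, and different `m` give different sets.
-/

/-- `ℤ⁶` with its standard symplectic structure. -/
abbrev H : Type := (Fin 3 → ℤ) × (Fin 3 → ℤ)

/-- The standard symplectic form on `ℤ⁶`. -/
def B (x y : H) : ℤ := ∑ i, (x.1 i * y.2 i - x.2 i * y.1 i)

/-- The homology class `x = a₁`. -/
def xcl : H := (Pi.single 0 1, 0)

def symplA (i : Fin 3) : H := (Pi.single i 1, 0)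

def IsIsotropic (L : Submodule ℤ H) : Prop := ∀ u ∈ L, ∀ w ∈ L, B u w = 0

def lagrangianA : Submodule ℤ H := LinearMap.ker (LinearMap.snd ℤ (Fin 3 → ℤ) (Fin 3 → ℤ))

def shearA (m n : ℤ) : H := symplA 0 - m • symplA 1 - n • symplA 2

@[simp] lemma mem_lagrangianA {p : H} : p ∈ lagrangianA ↔ p.2 = 0 := Iff.rfl

lemma symplA_mem_lagrangianA (i : Fin 3) : symplA i ∈ lagrangianA := rfl

lemma B_symplA_left (i : Fin 3) (p : H) : B (symplA i) p = p.2 i := by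
  simp [B, symplA, Pi.single_apply]

lemma isIsotropic_lagrangianA : IsIsotropic lagrangianA := by
  intro u hu w hw
  simp_all [B]

lemma eq_lagrangianA_of_isIsotropic_of_le {L : Submodule ℤ H} (hL : IsIsotropic L)
    (hle : lagrangianA ≤ L) : L = lagrangianA := by
  refine le_antisymm (fun p hp => mem_lagrangianA.2 (funext fun i => ?_)) hle
  rw [← B_symplA_left]
  exact hL _ (hle (symplA_mem_lagrangianA i)) p hp

lemma linearIndependent_shearA (m n : ℤ) :
    LinearIndependent ℤ ![shearA m n, symplA 1, symplA 2] := by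
  rw [Fintype.linearIndependent_iff]
  intro g hg
  have h := congrArg Prod.fst hg
  simp [funext_iff, Fin.forall_fin_succ, Fin.sum_univ_three, shearA, symplA, Pi.single_apply] at h
  intro i
  fin_cases i <;> simp <;> grind

lemma span_shearA (m n : ℤ) :
    Submodule.span ℤ {shearA m n, symplA 1, symplA 2} = lagrangianA := by
  refine le_antisymm ?_ fun p hp => ?_
  · simp [Submodule.span_le, Set.insert_subset_iff, shearA, symplA]
  · have hp' : p = p.1 0 • shearA m n + (p.1 1 + m * p.1 0) • symplA 1
        + (p.1 2 + n * p.1 0) • symplA 2 := by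
      refine Prod.ext (funext fun i => ?_) (by simpa [shearA, symplA] using hp)
      fin_cases i <;> simp [shearA, symplA] <;> ring
    rw [hp']
    exact add_mem (add_mem (Submodule.smul_mem _ _ (Submodule.subset_span (by simp)))
      (Submodule.smul_mem _ _ (Submodule.subset_span (by simp))))
      (Submodule.smul_mem _ _ (Submodule.subset_span (by simp)))

lemma xcl_eq_shearA_add (m n : ℤ) :
    xcl = (1 : ℤ) • shearA m n + m • symplA 1 + n • symplA 2 := by
  rw [one_smul, shearA, xcl, ← symplA]
  abel

lemma injective_shearA_triple :
    Function.Injective fun m : ℤ => ({shearA m 1, symplA 1, symplA 2} : Set H) := by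
  intro m m' h
  rcases (Set.ext_iff.1 h (shearA m 1)).1 (Set.mem_insert _ _) with h | h | h
  · simpa [shearA, symplA] using congrFun (congrArg Prod.fst h) 1
  all_goals simpa [shearA, symplA] using congrFun (congrArg Prod.fst h) 0

/-- There are infinitely many 3-element subsets `{c₁,c₂,c₃}` of `ℤ⁶` forming a basis of
a Lagrangian (maximal isotropic) subgroup with `x = n₁c₁ + n₂c₂ + n₃c₃` for some
positive integers `n₁, n₂, n₃`. -/
theorem stmt17 :
    Set.Infinite {S : Set H | ∃ c₁ c₂ c₃ : H,
      S = {c₁, c₂, c₃} ∧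
      LinearIndependent ℤ ![c₁, c₂, c₃] ∧
      (∃ L : Submodule ℤ H,
        Submodule.span ℤ {c₁, c₂, c₃} = L ∧
        (∀ u ∈ L, ∀ w ∈ L, B u w = 0) ∧
        (∀ L' : Submodule ℤ H, (∀ u ∈ L', ∀ w ∈ L', B u w = 0) → L ≤ L' → L' = L)) ∧
      ∃ n₁ n₂ n₃ : ℤ, 0 < n₁ ∧ 0 < n₂ ∧ 0 < n₃ ∧
        xcl = n₁ • c₁ + n₂ • c₂ + n₃ • c₃} := by
  refine Set.infinite_of_injOn_mapsTo injective_shearA_triple.injOn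
    (fun m (hm : 0 < m) => ?_) (Set.Ioi_infinite 0)
  exact ⟨_, _, _, rfl, linearIndependent_shearA m 1,
    ⟨lagrangianA, span_shearA m 1, isIsotropic_lagrangianA,
      fun _ hL hle => eq_lagrangianA_of_isIsotropic_of_le hL hle⟩,
    1, m, 1, one_pos, hm, one_pos, xcl_eq_shearA_add m 1⟩
end
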